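/- arXiv:1510.02425 — 2 statements merged into one kernel-verified Lean document; each statement's English description precedes it below -/
import Mathlib

section
/- Let λ2, λ3, λ4 be real numbers and define the quartic polynomials p(y) = λ4·y⁴ − λ3·y³ + λ2·y² + 1 and q(y) = λ4·y⁴ − (4λ4 + λ3)·y³ + (3λ3 + λ2)·y² − 2λ2·y + 1. If q(y) > 0 for all y > 0, then p(y) > 0 for all y > 0. (Equivalently, the set Λ2 of parameter vectors (λ2, λ3, λ4) for which q is positive on (0,∞) is contained in the set Λ1 of parameter vectors for which p is positive on (0,∞).) -/
/-!
Put `g(y) = p(y) e^{-y}`. Since `q = p - p'`, we get `g' = -q e^{-y}`, so positivity of `q` on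
`(0, ∞)` makes `g` strictly decreasing there. As `g → 0` at infinity, `g` stays positive on
`(0, ∞)`, and so does `p`.
-/

open Real Filter Topology Set Polynomial

theorem StrictAntiOn.lt_of_tendsto_atTop {α β : Type*} [LinearOrder α] [NoMaxOrder α]
    [Preorder β] [TopologicalSpace β] [ClosedIicTopology β] {f : α → β} {a : α} {l : β}
    (hf : StrictAntiOn f (Ioi a)) (hlim : Tendsto f atTop (𝓝 l)) {x : α} (hx : a < x) :
    l < f x := by
  have : Nonempty α := ⟨x⟩
  obtain ⟨z, hxz⟩ := exists_gt x
  have hz : a < z := hx.trans hxz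
  have hlz : l ≤ f z := le_of_tendsto hlim <| by
    filter_upwards [eventually_ge_atTop z] with w hzw
    exact hf.antitoneOn hz (hz.trans_le hzw) hzw
  exact hlz.trans_lt (hf hx hz hxz)

theorem hasDerivAt_mul_exp_neg {f : ℝ → ℝ} {f' x : ℝ} (hf : HasDerivAt f f' x) :
    HasDerivAt (fun x => f x * exp (-x)) ((f' - f x) * exp (-x)) x := by
  have hexp : HasDerivAt (fun x => exp (-x)) (-exp (-x)) x := by
    simpa using (hasDerivAt_neg x).exp
  exact (hf.mul hexp).congr_deriv (by ring)

theorem strictAntiOn_mul_exp_neg_of_deriv_lt_self {f f' : ℝ → ℝ} {a : ℝ}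
    (hf : ∀ x, a < x → HasDerivAt f (f' x) x) (hlt : ∀ x, a < x → f' x < f x) :
    StrictAntiOn (fun x => f x * exp (-x)) (Ioi a) := by
  have hg (x : ℝ) (hx : a < x) := hasDerivAt_mul_exp_neg (hf x hx)
  refine strictAntiOn_of_hasDerivWithinAt_neg (f' := fun x => (f' x - f x) * exp (-x))
    (convex_Ioi a) (fun x hx => (hg x hx).continuousAt.continuousWithinAt) ?_ ?_
  · rw [interior_Ioi]
    exact fun x hx => (hg x hx).hasDerivWithinAt
  · rw [interior_Ioi]
    exact fun x hx => mul_neg_of_neg_of_pos (sub_neg.2 (hlt x hx)) (exp_pos _)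

theorem pos_of_deriv_lt_self_of_tendsto_mul_exp_neg {f f' : ℝ → ℝ} {a : ℝ}
    (hf : ∀ x, a < x → HasDerivAt f (f' x) x) (hlt : ∀ x, a < x → f' x < f x)
    (hlim : Tendsto (fun x => f x * exp (-x)) atTop (𝓝 0)) {x : ℝ} (hx : a < x) :
    0 < f x :=
  pos_of_mul_pos_left
    ((strictAntiOn_mul_exp_neg_of_deriv_lt_self hf hlt).lt_of_tendsto_atTop hlim hx)
    (exp_pos _).le

theorem Polynomial.tendsto_eval_mul_exp_neg_atTop (P : ℝ[X]) :
    Tendsto (fun x => P.eval x * exp (-x)) atTop (𝓝 0) := by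
  induction P using Polynomial.induction_on' with
  | add P Q hP hQ => simpa [add_mul] using hP.add hQ
  | monomial n c =>
    simpa [mul_assoc] using (tendsto_pow_mul_exp_neg_atTop_nhds_zero n).const_mul c

/-- Lemma 1 of the paper: if the quartic
`q(y) = λ4·y⁴ − (4λ4 + λ3)·y³ + (3λ3 + λ2)·y² − 2λ2·y + 1` is positive on `(0, ∞)`,
then so is `p(y) = λ4·y⁴ − λ3·y³ + λ2·y² + 1`; i.e. `Λ2 ⊆ Λ1`. -/
theorem lambda2_subset_lambda1 (l2 l3 l4 : ℝ)
    (hq : ∀ y : ℝ, 0 < y →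
      0 < l4 * y ^ 4 - (4 * l4 + l3) * y ^ 3 + (3 * l3 + l2) * y ^ 2 - 2 * l2 * y + 1) :
    ∀ y : ℝ, 0 < y → 0 < l4 * y ^ 4 - l3 * y ^ 3 + l2 * y ^ 2 + 1 := by
  intro y hy
  set p : ℝ[X] := C l4 * X ^ 4 - C l3 * X ^ 3 + C l2 * X ^ 2 + 1
  have eval_p (x : ℝ) : p.eval x = l4 * x ^ 4 - l3 * x ^ 3 + l2 * x ^ 2 + 1 := by simp [p]
  have eval_derivative_p (x : ℝ) :
      p.derivative.eval x = 4 * l4 * x ^ 3 - 3 * l3 * x ^ 2 + 2 * l2 * x := by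
    simp only [p, derivative_add, derivative_sub, derivative_C_mul_X_pow, derivative_one,
      eval_add, eval_sub, eval_mul, eval_C, eval_pow, eval_X, eval_zero]
    push_cast
    ring
  rw [← eval_p]
  refine pos_of_deriv_lt_self_of_tendsto_mul_exp_neg (fun x _ => p.hasDerivAt x)
    (fun x hx => ?_) p.tendsto_eval_mul_exp_neg_atTop hy
  rw [eval_p, eval_derivative_p]
  linarith [hq x hx]
end

section
/- For every real y, y² − 6y + 12 > 0. Moreover, for every y > 0 and every λ2 ∈ ℝ, setting λ3 = (2(y³ − 5y² + 8y)·λ2 + 4y − 12) / (y²·(y² − 6y + 12)) and λ4 = ((y³ − 4y² + 6y)·λ2 + 3y − 6) / (y³·(y² − 6y + 12)), the quartic q(u) = λ4·u⁴ − (4λ4 + λ3)·u³ + (3λ3 + λ2)·u² − 2λ2·u + 1 satisfies q(y) = 0 and q′(y) = 0; that is, y is a double root of q. -/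
/-!
Given `y ≠ 0` and `λ2`, the conditions `q(y) = 0` and `q'(y) = 0` are two linear equations in
`(λ3, λ4)`; the displayed formulas are their solution by Cramer's rule, the determinant being
`y⁴ (y² − 6y + 12) = y⁴ ((y − 3)² + 3)`, which never vanishes for `y ≠ 0`.
-/

lemma sq_sub_six_mul_add_twelve_pos (y : ℝ) : 0 < y ^ 2 - 6 * y + 12 := by
  nlinarith [sq_nonneg (y - 3)]

def boundaryQuartic (l2 l3 l4 u : ℝ) : ℝ :=
  l4 * u ^ 4 - (4 * l4 + l3) * u ^ 3 + (3 * l3 + l2) * u ^ 2 - 2 * l2 * u + 1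

lemma hasDerivAt_boundaryQuartic (l2 l3 l4 u : ℝ) :
    HasDerivAt (boundaryQuartic l2 l3 l4)
      (4 * l4 * u ^ 3 - 3 * (4 * l4 + l3) * u ^ 2 + 2 * (3 * l3 + l2) * u - 2 * l2) u := by
  refine (((((hasDerivAt_pow 4 u).const_mul l4).sub
    ((hasDerivAt_pow 3 u).const_mul (4 * l4 + l3))).add
    ((hasDerivAt_pow 2 u).const_mul (3 * l3 + l2))).sub
    ((hasDerivAt_id u).const_mul (2 * l2))).add_const 1 |>.congr_deriv ?_
  norm_num
  ring

noncomputable def boundaryLambda3 (y l2 : ℝ) : ℝ :=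
  (2 * (y ^ 3 - 5 * y ^ 2 + 8 * y) * l2 + 4 * y - 12) / (y ^ 2 * (y ^ 2 - 6 * y + 12))

noncomputable def boundaryLambda4 (y l2 : ℝ) : ℝ :=
  ((y ^ 3 - 4 * y ^ 2 + 6 * y) * l2 + 3 * y - 6) / (y ^ 3 * (y ^ 2 - 6 * y + 12))

section Parametrization

variable {y : ℝ} (hy : y ≠ 0) (l2 : ℝ)
include hy

lemma boundaryQuartic_boundaryLambda_eq_zero :
    boundaryQuartic l2 (boundaryLambda3 y l2) (boundaryLambda4 y l2) y = 0 := by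
  -- `field_simp` normalizes `y ^ 2 - 6 * y + 12` to this shape before looking for `≠ 0` facts.
  have hD : y * (y - 6) + 12 ≠ 0 := by nlinarith [sq_sub_six_mul_add_twelve_pos y]
  unfold boundaryQuartic boundaryLambda3 boundaryLambda4
  field_simp
  ring

lemma hasDerivAt_boundaryQuartic_boundaryLambda :
    HasDerivAt (boundaryQuartic l2 (boundaryLambda3 y l2) (boundaryLambda4 y l2)) 0 y := by
  convert hasDerivAt_boundaryQuartic l2 _ _ y using 1
  have hD : y * (y - 6) + 12 ≠ 0 := by nlinarith [sq_sub_six_mul_add_twelve_pos y]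
  unfold boundaryLambda3 boundaryLambda4
  field_simp
  ring

end Parametrization

/-- `y² − 6y + 12 > 0` for all real `y`, and the explicit parametrization
`λ3(y, λ2)`, `λ4(y, λ2)` of the boundary surface makes `y` a double root of the
quartic `q` (i.e. `q(y) = 0` and `q′(y) = 0`), as in the proof of Lemma 2. -/
theorem boundary_parametrization_double_root :
    (∀ y : ℝ, 0 < y ^ 2 - 6 * y + 12) ∧
    (∀ y : ℝ, 0 < y → ∀ l2 l3 l4 : ℝ,
      l3 = (2 * (y ^ 3 - 5 * y ^ 2 + 8 * y) * l2 + 4 * y - 12)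
            / (y ^ 2 * (y ^ 2 - 6 * y + 12)) →
      l4 = ((y ^ 3 - 4 * y ^ 2 + 6 * y) * l2 + 3 * y - 6)
            / (y ^ 3 * (y ^ 2 - 6 * y + 12)) →
      (l4 * y ^ 4 - (4 * l4 + l3) * y ^ 3 + (3 * l3 + l2) * y ^ 2 - 2 * l2 * y + 1 = 0 ∧
       deriv (fun u : ℝ =>
          l4 * u ^ 4 - (4 * l4 + l3) * u ^ 3 + (3 * l3 + l2) * u ^ 2 - 2 * l2 * u + 1) y
        = 0)) := by
  refine ⟨sq_sub_six_mul_add_twelve_pos, fun y hy l2 l3 l4 h3 h4 => ?_⟩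
  subst h3 h4
  exact ⟨boundaryQuartic_boundaryLambda_eq_zero hy.ne' l2,
    (hasDerivAt_boundaryQuartic_boundaryLambda hy.ne' l2).deriv⟩
end
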